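/- arXiv:1304.0232 — 6 statements merged into one kernel-verified Lean document; each statement's English description precedes it below -/
import Mathlib

section
/- Let F be a field and T, S : F^n → F^m be nonzero linear maps such that the image of T has dimension at least 2. Then there exist linearly independent vectors x, y ∈ F^n such that Tx and Sy are linearly independent. -/
theorem stmt_0 (F : Type*) [Field F] (n m : ℕ) (hn : 0 < n) (hm : 0 < m)
    (T S : (Fin n → F) →ₗ[F] (Fin m → F)) (hT : T ≠ 0) (hS : S ≠ 0)
    (hrk : 2 ≤ Module.finrank F (LinearMap.range T)) :
    ∃ x y : Fin n → F, LinearIndependent F ![x, y] ∧ LinearIndependent F ![T x, S y] := by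
  classical
  obtain ⟨y, hy⟩ : ∃ y, S y ≠ 0 := by
    by_contra h
    push_neg at h
    exact hS (LinearMap.ext fun v => by simp [h v])
  have hy0 : y ≠ 0 := by
    rintro rfl; simp at hy
  set V : Submodule F (Fin n → F) := Submodule.comap T (Submodule.span F {S y}) with hV
  set U : Submodule F (Fin n → F) := Submodule.span F {y} with hU
  -- V proper
  obtain ⟨u, hu⟩ : ∃ u, u ∉ V := by
    by_contra h
    push_neg at h
    have hle : LinearMap.range T ≤ Submodule.span F {S y} := by
      rintro _ ⟨v, rfl⟩
      exact h v
    have := Submodule.finrank_mono hle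
    rw [finrank_span_singleton hy] at this
    omega
  -- U proper
  obtain ⟨w, hw⟩ : ∃ w, w ∉ U := by
    by_contra h
    push_neg at h
    have hle : (⊤ : Submodule F (Fin n → F)) ≤ U := fun v _ => h v
    have h1 := Submodule.finrank_mono hle
    rw [finrank_top, Module.finrank_pi, Fintype.card_fin] at h1
    rw [hU, finrank_span_singleton hy0] at h1
    have h2 : Module.finrank F ↥(LinearMap.range T) ≤ n := by
      simpa [Module.finrank_pi] using (LinearMap.finrank_range_le T)
    omega
  -- pick x outside both V and U
  obtain ⟨x, hxV, hxU⟩ : ∃ x, x ∉ V ∧ x ∉ U := by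
    by_cases h1 : u ∈ U
    · by_cases h2 : w ∈ V
      · refine ⟨u + w, fun hc => hu ?_, fun hc => hw ?_⟩
        · simpa using V.sub_mem hc h2
        · have := U.sub_mem hc h1
          simpa using this
      · exact ⟨w, h2, hw⟩
    · exact ⟨u, hu, h1⟩
  refine ⟨x, y, ?_, ?_⟩
  · rw [linearIndependent_fin2]
    refine ⟨hy0, fun a ha => hxU ?_⟩
    simp only [Matrix.cons_val_zero, Matrix.cons_val_one, Matrix.head_cons] at ha
    rw [hU, Submodule.mem_span_singleton]
    exact ⟨a, ha⟩
  · rw [linearIndependent_fin2]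
    refine ⟨hy, fun a ha => hxV ?_⟩
    simp only [Matrix.cons_val_zero, Matrix.cons_val_one, Matrix.head_cons] at ha
    rw [hV, Submodule.mem_comap, Submodule.mem_span_singleton]
    exact ⟨a, ha⟩
end

section
/- Let F be a field with at least 3 elements, m ≥ n ≥ 2, and let B ∈ M_{m,n}(F) be a rank-one matrix. Then there exists R ∈ M_{m,n}(F) with R ≠ 0 and R ≠ B such that for every X ∈ M_{m,n}(F), if X − R has full rank n, then X has full rank n or X − B has full rank n. (In fact R = λB works for any scalar λ ∉ {0,1}.) -/
open Matrix

lemma full_rank_iff {F : Type*} [Field F] {m n : ℕ} (A : Matrix (Fin m) (Fin n) F) :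
    A.rank = n ↔ ∀ v, A.mulVec v = 0 → v = 0 := by
  have hk : (∀ v, A.mulVec v = 0 → v = 0) ↔ LinearMap.ker A.mulVecLin = ⊥ := by
    rw [LinearMap.ker_eq_bot']
    simp [Matrix.mulVecLin_apply]
  rw [hk, Matrix.rank]
  have hsum := A.mulVecLin.finrank_range_add_finrank_ker
  have hd : Module.finrank F (Fin n → F) = n := by simp
  rw [hd] at hsum
  constructor
  · intro h
    rw [← Submodule.finrank_eq_zero (R := F)]
    omega
  · intro h
    rw [h] at hsum
    simpa using hsum

lemma rank_one_parallel {F : Type*} [Field F] {m n : ℕ} (B : Matrix (Fin m) (Fin n) F)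
    (hB : B.rank = 1) {v w : Fin n → F} (hv : B.mulVec v ≠ 0) :
    ∃ c : F, B.mulVec w = c • B.mulVec v := by
  have hmem : B.mulVec v ∈ LinearMap.range B.mulVecLin := ⟨v, by simp⟩
  have hle : Submodule.span F {B.mulVec v} ≤ LinearMap.range B.mulVecLin := by
    simpa [Submodule.span_singleton_le_iff_mem] using hmem
  have hsp : Module.finrank F (Submodule.span F {B.mulVec v}) = 1 :=
    finrank_span_singleton hv
  have heq : Submodule.span F {B.mulVec v} = LinearMap.range B.mulVecLin := by
    apply Submodule.eq_of_le_of_finrank_le hle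
    rw [hsp]
    exact le_of_eq hB
  have hw : B.mulVec w ∈ Submodule.span F {B.mulVec v} := by
    rw [heq]; exact ⟨w, by simp⟩
  obtain ⟨c, hc⟩ := Submodule.mem_span_singleton.mp hw
  exact ⟨c, hc.symm⟩

theorem stmt_1 (F : Type*) [Field F] [DecidableEq F]
    (h3 : ∃ a b c : F, a ≠ b ∧ a ≠ c ∧ b ≠ c)
    (m n : ℕ) (hmn : n ≤ m) (hn : 2 ≤ n)
    (B : Matrix (Fin m) (Fin n) F) (hB : B.rank = 1) :
    ∃ R : Matrix (Fin m) (Fin n) F, R ≠ 0 ∧ R ≠ B ∧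
      ∀ X : Matrix (Fin m) (Fin n) F, (X - R).rank = n → X.rank = n ∨ (X - B).rank = n := by
  -- find a scalar l ∉ {0, 1}
  obtain ⟨a, b, c, hab, hac, hbc⟩ := h3
  have hl : ∃ l : F, l ≠ 0 ∧ l ≠ 1 := by
    rcases eq_or_ne a 0 with ha0 | ha0
    · rcases eq_or_ne b 1 with hb1 | hb1
      · exact ⟨c, by aesop, by aesop⟩
      · rcases eq_or_ne b 0 with hb0 | hb0
        · exact absurd (ha0.trans hb0.symm) hab
        · exact ⟨b, hb0, hb1⟩
    · rcases eq_or_ne a 1 with ha1 | ha1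
      · rcases eq_or_ne b 0 with hb0 | hb0
        · exact ⟨c, by aesop, by aesop⟩
        · exact ⟨b, hb0, fun h => hab (ha1.trans h.symm)⟩
      · exact ⟨a, ha0, ha1⟩
  obtain ⟨l, hl0, hl1⟩ := hl
  have hB0 : B ≠ 0 := by
    intro h; rw [h, Matrix.rank_zero] at hB; exact one_ne_zero hB.symm
  refine ⟨l • B, ?_, ?_, ?_⟩
  · simp [smul_eq_zero, hl0, hB0]
  · intro h
    have : (l - 1) • B = 0 := by rw [sub_smul, one_smul, h, sub_self]
    rcases smul_eq_zero.mp this with h' | h'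
    · exact hl1 (by linear_combination h')
    · exact hB0 h'
  · intro X hX
    by_contra hc
    push_neg at hc
    obtain ⟨h1, h2⟩ := hc
    rw [full_rank_iff] at hX
    obtain ⟨v, hXv, hv0⟩ : ∃ v, X.mulVec v = 0 ∧ v ≠ 0 := by
      by_contra h; push_neg at h
      exact h1 ((full_rank_iff X).mpr fun v hv => h v hv)
    obtain ⟨w, hXw, hw0⟩ : ∃ w, X.mulVec w = B.mulVec w ∧ w ≠ 0 := by
      by_contra h; push_neg at h
      refine h2 ((full_rank_iff _).mpr fun w hw => ?_)
      rw [Matrix.sub_mulVec, sub_eq_zero] at hw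
      exact h w hw
    have hBv : B.mulVec v ≠ 0 := by
      intro h
      apply hv0
      apply hX
      rw [Matrix.sub_mulVec, Matrix.smul_mulVec, hXv, h, smul_zero, sub_zero]
    have hBw : B.mulVec w ≠ 0 := by
      intro h
      apply hw0
      apply hX
      rw [Matrix.sub_mulVec, Matrix.smul_mulVec, hXw, h, smul_zero, sub_zero]
    obtain ⟨c', hc'⟩ := rank_one_parallel B hB (w := w) hBv
    have hc0 : c' ≠ 0 := by
      intro h; rw [h, zero_smul] at hc'; exact hBw hc'
    set u : Fin n → F := ((1 - l) * c') • v + l • w with hu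
    have hXu : X.mulVec u = (l * c') • B.mulVec v := by
      rw [hu, Matrix.mulVec_add, Matrix.mulVec_smul, Matrix.mulVec_smul, hXv, hXw, hc']
      module
    have hBu : B.mulVec u = c' • B.mulVec v := by
      rw [hu, Matrix.mulVec_add, Matrix.mulVec_smul, Matrix.mulVec_smul, hc']
      module
    have hu0 : u = 0 := by
      apply hX
      rw [Matrix.sub_mulVec, Matrix.smul_mulVec, hXu, hBu]
      module
    rw [hu0, Matrix.mulVec_zero] at hXu
    exact hBv (by
      have := hXu.symm
      rwa [smul_eq_zero, mul_eq_zero, or_iff_right hl0, or_iff_right hc0] at this)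
end

section
/- Let F be a field with at least 3 elements and let B : F^n → F^m be a linear map whose image has dimension at least 2. Then for every linear map R : F^n → F^m with R ≠ 0 and R ≠ B, there exists a linear map X : F^n → F^m such that X − R is injective while X and X − B are both non-injective. -/
/-!
Write `C = B - R`. It suffices to find independent vectors `u, w` such that `R u, C w` are
independent as well: an injective `S` with `S u = -R u` and `S w = C w` exists since `n ≤ m`,
and `X = R + S` then kills `u` while `X - B = S - C` kills `w`. Such `u, w` exist because `R`
and `C` cannot both map into one line (their sum `B` has rank at least two), and a vector space
is never the union of two proper subspaces.
-/

open Module Submodule Function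

lemma Submodule.exists_notMem_of_ne_top_of_ne_top {R M : Type*} [Ring R] [AddCommGroup M]
    [Module R M] {p q : Submodule R M} (hp : p ≠ ⊤) (hq : q ≠ ⊤) : ∃ x, x ∉ p ∧ x ∉ q := by
  obtain ⟨x, hxp⟩ := SetLike.exists_not_mem_of_ne_top p hp
  obtain ⟨y, hyq⟩ := SetLike.exists_not_mem_of_ne_top q hq
  by_cases hxq : x ∈ q
  · by_cases hyp : y ∈ p
    · refine ⟨x + y, fun h => hxp ?_, fun h => hyq ?_⟩
      · simpa using p.sub_mem h hyp
      · simpa using q.sub_mem h hxq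
    · exact ⟨y, hyp, hyq⟩
  · exact ⟨x, hxp, hxq⟩

section Field

variable {F V W : Type*} [Field F] [AddCommGroup V] [Module F V] [AddCommGroup W] [Module F W]

lemma LinearIndependent.pair_iff_notMem_span_singleton {x y : V} (hx : x ≠ 0) :
    LinearIndependent F ![x, y] ↔ y ∉ F ∙ x := by
  simp [LinearIndependent.pair_iff' hx, mem_span_singleton]

lemma Module.Basis.sumExtend_apply_inl {ι : Type*} {v : ι → V} (hv : LinearIndependent F v)
    (i : ι) : Basis.sumExtend hv (Sum.inl i) = v i := by
  simp only [Basis.sumExtend, Equiv.trans_def, Basis.coe_reindex, Basis.coe_extend, comp_apply]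
  rfl

/-- Extend both families to bases and embed the complementary part of the first basis into
that of the second. -/
theorem LinearIndependent.exists_injective_linearMap_apply_eq [FiniteDimensional F V]
    [FiniteDimensional F W] (hVW : finrank F V ≤ finrank F W) {ι : Type*} {v : ι → V}
    {w : ι → W} (hv : LinearIndependent F v) (hw : LinearIndependent F w) :
    ∃ S : V →ₗ[F] W, Injective S ∧ ∀ i, S (v i) = w i := by
  let bv := Basis.sumExtend hv
  let bw := Basis.sumExtend hw
  have := Module.Finite.finite_basis bv
  have := Module.Finite.finite_basis bw
  have := Finite.sum_left (α := ι) (Basis.sumExtendIndex hv)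
  have := Finite.sum_right ι (β := Basis.sumExtendIndex hv)
  have := Finite.sum_right ι (β := Basis.sumExtendIndex hw)
  have := Fintype.ofFinite ι
  have := Fintype.ofFinite (Basis.sumExtendIndex hv)
  have := Fintype.ofFinite (Basis.sumExtendIndex hw)
  obtain ⟨e⟩ : Nonempty (Basis.sumExtendIndex hv ↪ Basis.sumExtendIndex hw) := by
    refine Embedding.nonempty_of_card_le ?_
    rw [finrank_eq_card_basis bv, finrank_eq_card_basis bw, Fintype.card_sum,
      Fintype.card_sum] at hVW
    omega
  refine ⟨bv.constr F (bw ∘ Sum.map id e), bv.injective_constr_of_linearIndependent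
    (bw.linearIndependent.comp _ (Sum.map_injective.2 ⟨injective_id, e.injective⟩)), fun i => ?_⟩
  rw [← Basis.sumExtend_apply_inl hv, Basis.constr_basis]
  exact Basis.sumExtend_apply_inl hw i

lemma exists_linearIndependent_pair_of_comap_ne_top (f g : V →ₗ[F] W) {x : V} (hx : f x ≠ 0)
    (hxV : (F ∙ x) ≠ ⊤) (hg : comap g (F ∙ f x) ≠ ⊤) :
    ∃ y, LinearIndependent F ![x, y] ∧ LinearIndependent F ![f x, g y] := by
  obtain ⟨y, hgy, hy⟩ := exists_notMem_of_ne_top_of_ne_top hg hxV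
  have hx0 : x ≠ 0 := by rintro rfl; simp at hx
  exact ⟨y, (LinearIndependent.pair_iff_notMem_span_singleton hx0).2 hy,
    (LinearIndependent.pair_iff_notMem_span_singleton hx).2 hgy⟩

theorem exists_linearIndependent_pair_apply [FiniteDimensional F V] (f g : V →ₗ[F] W)
    (hf : f ≠ 0) (hg : g ≠ 0) (hfg : 2 ≤ finrank F (LinearMap.range (f + g))) :
    ∃ u w, LinearIndependent F ![u, w] ∧ LinearIndependent F ![f u, g w] := by
  have hV : 2 ≤ finrank F V := hfg.trans (LinearMap.finrank_range_le _)
  have hline : ∀ x : V, (F ∙ x) ≠ ⊤ := fun x hx => by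
    have := finrank_span_le_card (R := F) ({x} : Set V)
    rw [hx, finrank_top] at this
    simp only [Set.toFinset_singleton, Finset.card_singleton] at this
    omega
  obtain ⟨u, hu⟩ : ∃ u, f u ≠ 0 := by
    by_contra! h
    exact hf (LinearMap.ext h)
  obtain ⟨w, hw⟩ : ∃ w, g w ≠ 0 := by
    by_contra! h
    exact hg (LinearMap.ext h)
  by_cases hgu : comap g (F ∙ f u) = ⊤
  · have hg_le : LinearMap.range g ≤ F ∙ f u := LinearMap.range_le_iff_comap.2 hgu
    have hfw : comap f (F ∙ g w) ≠ ⊤ := fun hfw => by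
      have hf_le : LinearMap.range f ≤ F ∙ f u := (LinearMap.range_le_iff_comap.2 hfw).trans
        ((span_singleton_le_iff_mem _ _).2 (hg_le (LinearMap.mem_range_self g w)))
      have := finrank_mono ((LinearMap.range_add_le f g).trans (sup_le hf_le hg_le))
      rw [finrank_span_singleton hu] at this
      omega
    obtain ⟨u', hwu', hgf⟩ := exists_linearIndependent_pair_of_comap_ne_top g f hw (hline w) hfw
    exact ⟨u', w, LinearIndependent.pair_symm_iff.1 hwu', LinearIndependent.pair_symm_iff.1 hgf⟩
  · obtain ⟨w', huw', hfg'⟩ := exists_linearIndependent_pair_of_comap_ne_top f g hu (hline u) hgu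
    exact ⟨u, w', huw', hfg'⟩

end Field

theorem stmt_2_general (F : Type*) [Field F]
    (m n : ℕ) (hmn : n ≤ m)
    (B : (Fin n → F) →ₗ[F] (Fin m → F))
    (hrk : 2 ≤ Module.finrank F (LinearMap.range B)) :
    ∀ R : (Fin n → F) →ₗ[F] (Fin m → F), R ≠ 0 → R ≠ B →
      ∃ X : (Fin n → F) →ₗ[F] (Fin m → F),
        Function.Injective (X - R) ∧ ¬ Function.Injective X ∧ ¬ Function.Injective (X - B) := by
  intro R hR hRB
  obtain ⟨u, w, huw, hRC⟩ := exists_linearIndependent_pair_apply R (B - R) hR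
    (sub_ne_zero.2 hRB.symm) (by rwa [add_sub_cancel])
  obtain ⟨S, hS, hSuw⟩ := huw.exists_injective_linearMap_apply_eq (by simpa using hmn)
    (LinearIndependent.pair_neg_left_iff.2 hRC)
  have hSu : S u = -R u := by simpa using hSuw 0
  have hSw : S w = B w - R w := by simpa using hSuw 1
  refine ⟨R + S, by rwa [add_sub_cancel_left], fun hX => huw.ne_zero 0 ?_,
    fun hX => huw.ne_zero 1 ?_⟩
  · exact (injective_iff_map_eq_zero _).1 hX u (by simp [hSu])
  · exact (injective_iff_map_eq_zero _).1 hX w (by simp [hSw])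

theorem stmt_2 (F : Type*) [Field F]
    (h3 : ∃ a b c : F, a ≠ b ∧ a ≠ c ∧ b ≠ c)
    (m n : ℕ) (hmn : n ≤ m) (hn : 2 ≤ n)
    (B : (Fin n → F) →ₗ[F] (Fin m → F))
    (hrk : 2 ≤ Module.finrank F (LinearMap.range B)) :
    ∀ R : (Fin n → F) →ₗ[F] (Fin m → F), R ≠ 0 → R ≠ B →
      ∃ X : (Fin n → F) →ₗ[F] (Fin m → F),
        Function.Injective (X - R) ∧ ¬ Function.Injective X ∧ ¬ Function.Injective (X - B) :=
  stmt_2_general F m n hmn B hrk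
end

section
/- Let H be a complex Hilbert space, B ∈ B(H), λ ∈ ℂ with |λ| > ‖B‖, and x, y ∈ H with ⟨x, y⟩ = 0. Then λ(I + xy*) − B is invertible if and only if ⟨B(λI − B)^{-1}x, y⟩ ≠ −1. -/
/-- The rank-one operator `xy*` given by `z ↦ ⟨z, y⟩ x` (inner product linear in the
first argument, i.e. `⟪y, z⟫` in Mathlib's convention). -/
noncomputable def outer {H : Type*} [NormedAddCommGroup H] [InnerProductSpace ℂ H]
    (x y : H) : H →L[ℂ] H :=
  (ContinuousLinearMap.toSpanSingleton ℂ x).comp (innerSL ℂ y)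

/-!
With `A = λI - B`, invertible by the Neumann series, one has the factorisation
`λ(I + xy*) - B = A + λ xy* = A (I + uy*)` with `u = λ A⁻¹ x`, and `I + uy*` is invertible
exactly when `1 + ⟨u, y⟩ ≠ 0`. Since `B A⁻¹ = λ A⁻¹ - I` and `⟨x, y⟩ = 0`,
`⟨B A⁻¹ x, y⟩ = ⟨u, y⟩`.
-/

section Outer

variable {H : Type*} [NormedAddCommGroup H] [InnerProductSpace ℂ H]

@[simp]
lemma outer_apply (u v z : H) : outer u v z = inner ℂ v z • u := by
  simp [outer]

lemma outer_smul_left (c : ℂ) (u v : H) : outer (c • u) v = c • outer u v := by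
  ext z
  simp [smul_comm c]

lemma mul_outer (T : H →L[ℂ] H) (u v : H) : T * outer u v = outer (T u) v := by
  ext z
  simp

lemma outer_mul_outer (u v : H) : outer u v * outer u v = inner ℂ v u • outer u v := by
  rw [mul_outer, outer_apply, outer_smul_left]

lemma isUnit_one_add_outer_iff (u v : H) :
    IsUnit (1 + outer u v) ↔ 1 + inner ℂ v u ≠ 0 := by
  constructor
  · rintro hunit hc
    obtain ⟨S, hS⟩ := hunit.exists_left_inv
    have hu : u ≠ 0 := by
      rintro rfl
      simp at hc
    have hker : (1 + outer u v) u = 0 := by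
      simpa [add_smul] using congrArg (· • u) hc
    refine hu ?_
    calc u = (S * (1 + outer u v)) u := by rw [hS]; rfl
      _ = 0 := by rw [mul_apply_eq_comp, hker, map_zero]
  · intro hc
    -- `(1 + T)⁻¹ = 1 - T / (1 + c)` because `T² = c T`.
    set d := (1 + inner ℂ v u)⁻¹
    have hd : d + d * inner ℂ v u = 1 := by
      rw [← mul_one_add, inv_mul_cancel₀ hc]
    refine ⟨⟨1 + outer u v, 1 - d • outer u v, ?_, ?_⟩, rfl⟩
    · rw [mul_sub, mul_one, add_mul, one_mul, mul_smul_comm, outer_mul_outer, smul_smul]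
      linear_combination (norm := module) -hd • outer u v
    · rw [sub_mul, one_mul, mul_add, mul_one, smul_mul_assoc, outer_mul_outer, smul_smul]
      linear_combination (norm := module) -hd • outer u v

end Outer

lemma isUnit_smul_one_sub_of_norm_lt {𝕜 E : Type*} [NontriviallyNormedField 𝕜]
    [NormedAddCommGroup E] [NormedSpace 𝕜 E] [CompleteSpace E] {B : E →L[𝕜] E} {l : 𝕜}
    (hl : ‖B‖ < ‖l‖) : IsUnit (l • (1 : E →L[𝕜] E) - B) := by
  rw [← Algebra.algebraMap_eq_smul_one, ← spectrum.mem_resolventSet_iff]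
  refine spectrum.mem_resolventSet_of_norm_lt_mul ?_
  calc ‖B‖ * ‖(1 : E →L[𝕜] E)‖ ≤ ‖B‖ * 1 := by gcongr; exact ContinuousLinearMap.norm_id_le
    _ < ‖l‖ := by rwa [mul_one]

theorem stmt_15 (H : Type*) [NormedAddCommGroup H] [InnerProductSpace ℂ H] [CompleteSpace H]
    (B : H →L[ℂ] H) (l : ℂ) (hl : ‖B‖ < ‖l‖)
    (x y : H) (hxy : inner ℂ y x = (0 : ℂ)) :
    IsUnit (l • (1 + outer x y) - B) ↔
      inner ℂ y ((B * Ring.inverse (l • (1 : H →L[ℂ] H) - B)) x) ≠ (-1 : ℂ) := by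
  obtain ⟨A, hA⟩ := isUnit_smul_one_sub_of_norm_lt hl
  have hB : B = l • 1 - ↑A := by rw [hA]; abel
  have hAx : (A : H →L[ℂ] H) ((↑A⁻¹ : H →L[ℂ] H) x) = x := by
    rw [← mul_apply_eq_comp, A.mul_inv, one_apply_eq_self]
  have hfactor : l • (1 + outer x y) - B = A * (1 + outer (l • (↑A⁻¹ : H →L[ℂ] H) x) y) := by
    rw [mul_add, mul_one, mul_outer, map_smul, hAx, outer_smul_left, hB]
    module
  have hinner : inner ℂ y ((B * ↑A⁻¹) x) = inner ℂ y (l • (↑A⁻¹ : H →L[ℂ] H) x) := by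
    rw [hB, sub_mul, smul_one_mul, A.mul_inv, sub_apply, one_apply_eq_self,
      smul_apply, inner_sub_right, hxy, sub_zero]
  rw [hfactor, A.isUnit_units_mul, isUnit_one_add_outer_iff, ← hA, Ring.inverse_unit, hinner,
    Ne, Ne, add_eq_zero_iff_eq_neg']
end

section
/- Let H be a complex Hilbert space and T, S : H → H bijective additive maps, semilinear with respect to the same automorphism σ of ℂ, such that for all x, y ∈ H: ⟨Tx, Sy⟩ = 0 if and only if ⟨x, y⟩ = 0, and ⟨Tx, Sy⟩ = 1 if and only if ⟨x, y⟩ = 1. If T and S are both linear, then ⟨Tx, Sy⟩ = ⟨x, y⟩ for all x, y ∈ H, and hence T = (S*)^{-1}. -/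
/-!
If `⟪y, x⟫ = c ≠ 0`, then `⟪(conj c)⁻¹ • y, x⟫ = 1`, so the hypothesis gives
`⟪S ((conj c)⁻¹ • y), T x⟫ = 1`, i.e. `⟪S y, T x⟫ = c` by linearity of `S`; the case `c = 0`
is the other hypothesis.
The identity `⟪S y, T x⟫ = ⟪y, x⟫` says `S† T = 1`, and a left inverse of the surjective `T`
is also a right inverse.
-/

open ContinuousLinearMap

section

variable {𝕜 E F : Type*} [RCLike 𝕜] [NormedAddCommGroup E] [InnerProductSpace 𝕜 E]
  [NormedAddCommGroup F] [InnerProductSpace 𝕜 F]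

theorem inner_map_map_eq_of_preserves_inner_zero_one (T : E → F) (S : E →ₗ[𝕜] F)
    (h0 : ∀ x y, inner 𝕜 y x = (0 : 𝕜) → inner 𝕜 (S y) (T x) = (0 : 𝕜))
    (h1 : ∀ x y, inner 𝕜 y x = (1 : 𝕜) → inner 𝕜 (S y) (T x) = (1 : 𝕜)) (x y : E) :
    inner 𝕜 (S y) (T x) = inner 𝕜 y x := by
  by_cases hc : inner 𝕜 y x = (0 : 𝕜)
  · rw [hc, h0 x y hc]
  have hnorm : inner 𝕜 ((starRingEnd 𝕜) (inner 𝕜 y x)⁻¹ • y) x = (1 : 𝕜) := by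
    rw [inner_smul_left, starRingEnd_self_apply, inv_mul_cancel₀ hc]
  have hscaled := h1 x _ hnorm
  rw [map_smul, inner_smul_left, starRingEnd_self_apply] at hscaled
  exact ((inv_mul_eq_one₀ hc).mp hscaled).symm

variable [CompleteSpace E] [CompleteSpace F]

theorem adjoint_comp_eq_id_of_inner_map_map (T S : E →L[𝕜] F)
    (h : ∀ x y, inner 𝕜 (S y) (T x) = inner 𝕜 y x) : (adjoint S).comp T = ContinuousLinearMap.id 𝕜 E := by
  ext x
  refine ext_inner_left 𝕜 fun y => ?_
  rw [comp_apply, adjoint_inner_right, h, id_apply]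

end

theorem comp_eq_id_of_comp_eq_id_of_surjective {R M N : Type*} [Semiring R]
    [TopologicalSpace M] [AddCommMonoid M] [Module R M]
    [TopologicalSpace N] [AddCommMonoid N] [Module R N]
    (T : M →L[R] N) (A : N →L[R] M) (hAT : A.comp T = ContinuousLinearMap.id R M) (hT : Function.Surjective T) :
    T.comp A = ContinuousLinearMap.id R N := by
  have hleft : Function.LeftInverse A T := fun x => by
    rw [← comp_apply, hAT, id_apply]
  ext y
  exact hleft.rightInverse_of_surjective hT y

theorem stmt_17_general (H : Type*) [NormedAddCommGroup H] [InnerProductSpace ℂ H] [CompleteSpace H]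
    (T S : H →L[ℂ] H)
    (hT : Function.Bijective T)
    (h0 : ∀ x y : H, inner ℂ (S y) (T x) = (0 : ℂ) ↔ inner ℂ y x = (0 : ℂ))
    (h1 : ∀ x y : H, inner ℂ (S y) (T x) = (1 : ℂ) ↔ inner ℂ y x = (1 : ℂ)) :
    (∀ x y : H, inner ℂ (S y) (T x) = (inner ℂ y x : ℂ)) ∧
      (ContinuousLinearMap.adjoint S).comp T = ContinuousLinearMap.id ℂ H ∧
      T.comp (ContinuousLinearMap.adjoint S) = ContinuousLinearMap.id ℂ H := by
  have hinner : ∀ x y : H, inner ℂ (S y) (T x) = (inner ℂ y x : ℂ) :=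
    inner_map_map_eq_of_preserves_inner_zero_one T (S : H →ₗ[ℂ] H)
      (fun x y => (h0 x y).2) (fun x y => (h1 x y).2)
  have hleft := adjoint_comp_eq_id_of_inner_map_map T S hinner
  exact ⟨hinner, hleft, comp_eq_id_of_comp_eq_id_of_surjective T _ hleft hT.2⟩

theorem stmt_17 (H : Type*) [NormedAddCommGroup H] [InnerProductSpace ℂ H] [CompleteSpace H]
    (T S : H →L[ℂ] H)
    (hT : Function.Bijective T) (hS : Function.Bijective S)
    (h0 : ∀ x y : H, inner ℂ (S y) (T x) = (0 : ℂ) ↔ inner ℂ y x = (0 : ℂ))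
    (h1 : ∀ x y : H, inner ℂ (S y) (T x) = (1 : ℂ) ↔ inner ℂ y x = (1 : ℂ)) :
    (∀ x y : H, inner ℂ (S y) (T x) = (inner ℂ y x : ℂ)) ∧
      (ContinuousLinearMap.adjoint S).comp T = ContinuousLinearMap.id ℂ H ∧
      T.comp (ContinuousLinearMap.adjoint S) = ContinuousLinearMap.id ℂ H :=
  stmt_17_general H T S hT h0 h1
end

section
/- Let H be an infinite-dimensional complex Hilbert space and φ : B(H) → B(H) a bijection such that for all A, B ∈ B(H), A − B is invertible if and only if φ(A) − φ(B) is invertible. Then the map A ↦ φ(A) − φ(0) maps the set of finite-rank operators bijectively onto the set of finite-rank operators. -/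
section Stmt18Aux

variable {H : Type*} [NormedAddCommGroup H] [InnerProductSpace ℂ H] [CompleteSpace H]

def RkLe1 (X : H →L[ℂ] H) : Prop := ∃ (f : H →L[ℂ] ℂ) (x : H), X = f.smulRight x

def Rk1 (X : H →L[ℂ] H) : Prop :=
  ∃ (f : H →L[ℂ] ℂ) (x : H), f ≠ 0 ∧ x ≠ 0 ∧ X = f.smulRight x

def Adj (A B : H →L[ℂ] H) : Prop :=
  ∃ C, C ≠ A ∧ C ≠ B ∧ ∀ D, ¬IsUnit (A - D) → ¬IsUnit (B - D) → ¬IsUnit (C - D)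

inductive FinChain : (H →L[ℂ] H) → Prop
  | zero : FinChain 0
  | step {A B : H →L[ℂ] H} : FinChain A → Rk1 (B - A) → FinChain B

theorem shear_isUnit (f : H →L[ℂ] ℂ) (x : H) (hc : 1 + f x ≠ 0) :
    IsUnit (1 + f.smulRight x) := by
  set c := f x with hcdef
  have h1 : (1 + f.smulRight x) * (1 - (1 + c)⁻¹ • f.smulRight x) = 1 := by
    ext v
    simp only [ContinuousLinearMap.mul_apply, ContinuousLinearMap.add_apply,
      ContinuousLinearMap.sub_apply, ContinuousLinearMap.one_apply,
      ContinuousLinearMap.smul_apply, ContinuousLinearMap.smulRight_apply,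
      map_sub, map_add, map_smul, smul_smul, smul_eq_mul]
    match_scalars <;> field_simp <;> ring
  have h2 : (1 - (1 + c)⁻¹ • f.smulRight x) * (1 + f.smulRight x) = 1 := by
    ext v
    simp only [ContinuousLinearMap.mul_apply, ContinuousLinearMap.add_apply,
      ContinuousLinearMap.sub_apply, ContinuousLinearMap.one_apply,
      ContinuousLinearMap.smul_apply, ContinuousLinearMap.smulRight_apply,
      map_sub, map_add, map_smul, smul_smul, smul_eq_mul]
    match_scalars <;> field_simp <;> ring
  exact ⟨⟨_, _, h1, h2⟩, rfl⟩

theorem exists_dual_family {n : ℕ} (x : Fin n → H) (li : LinearIndependent ℂ x) (c : Fin n → ℂ) :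
    ∃ g : H →L[ℂ] ℂ, ∀ i, g (x i) = c i := by
  set V : Submodule ℂ H := Submodule.span ℂ (Set.range x) with hV
  haveI : FiniteDimensional ℂ V := FiniteDimensional.span_of_finite ℂ (Set.finite_range x)
  let b : Module.Basis (Fin n) ℂ V := Module.Basis.span li
  let g₀ : V →ₗ[ℂ] ℂ := ∑ i, c i • b.coord i
  let g₁ : V →L[ℂ] ℂ := LinearMap.toContinuousLinearMap g₀
  refine ⟨g₁.comp (V.orthogonalProjectionOnto), fun i => ?_⟩
  have hmem : x i ∈ V := Submodule.subset_span ⟨i, rfl⟩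
  have hproj : V.orthogonalProjectionOnto (x i) = ⟨x i, hmem⟩ :=
    V.orthogonalProjectionOnto_mem_subspace_eq_self ⟨x i, hmem⟩
  simp only [ContinuousLinearMap.comp_apply, hproj]
  have hb : (⟨x i, hmem⟩ : V) = b i := by
    apply Subtype.ext
    simp [b, Module.Basis.span_apply li i]
  rw [hb]
  show g₀ (b i) = c i
  simp only [g₀, LinearMap.sum_apply, LinearMap.smul_apply, Module.Basis.coord_apply,
    Module.Basis.repr_self, smul_eq_mul]
  rw [Finset.sum_eq_single i]
  · simp
  · intro j _ hji
    simp [Finsupp.single_apply, Ne.symm hji]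
  · simp

theorem exists_dual_pair {a b : H} (li : LinearIndependent ℂ ![a, b]) (c d : ℂ) :
    ∃ g : H →L[ℂ] ℂ, g a = c ∧ g b = d := by
  obtain ⟨g, hg⟩ := exists_dual_family ![a, b] li ![c, d]
  exact ⟨g, by simpa using hg 0, by simpa using hg 1⟩

theorem exists_dual_single {a : H} (ha : a ≠ 0) (c : ℂ) : ∃ g : H →L[ℂ] ℂ, g a = c := by
  obtain ⟨g, hg⟩ := exists_dual_family ![a] (linearIndependent_unique_iff.2 (by simpa using ha)) ![c]
  exact ⟨g, by simpa using hg 0⟩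

theorem exists_dual_triple {a b c : H} (li : LinearIndependent ℂ ![a, b, c]) (p q r : ℂ) :
    ∃ g : H →L[ℂ] ℂ, g a = p ∧ g b = q ∧ g c = r := by
  obtain ⟨g, hg⟩ := exists_dual_family ![a, b, c] li ![p, q, r]
  exact ⟨g, by simpa using hg 0, by simpa using hg 1, by simpa using hg 2⟩

theorem li_triple {a b c : H} (li : LinearIndependent ℂ ![a, b])
    (hc : c ∉ Submodule.span ℂ {a, b}) : LinearIndependent ℂ ![a, b, c] := by
  have he : (![a, b, c] : Fin 3 → H) = Fin.snoc ![a, b] c := by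
    funext i
    fin_cases i <;> simp [Fin.snoc] <;> rfl
  rw [he, linearIndependent_fin_snoc]
  refine ⟨li, ?_⟩
  have : Set.range ![a, b] = {a, b} := by
    rw [Matrix.range_cons, Matrix.range_cons, Matrix.range_empty]
    simp [Set.pair_comm]
  rwa [this]

theorem unit_injective (T : H →L[ℂ] H) (hT : IsUnit T) : Function.Injective T := by
  obtain ⟨⟨a, b, hab, hba⟩, rfl⟩ := hT
  intro p q hpq
  have h1 : b (a p) = p := by
    have := congrFun (congrArg DFunLike.coe hba) p
    simpa [ContinuousLinearMap.mul_apply] using this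
  have h2 : b (a q) = q := by
    have := congrFun (congrArg DFunLike.coe hba) q
    simpa [ContinuousLinearMap.mul_apply] using this
  rw [← h1, ← h2]
  exact congrArg b hpq

theorem not_isUnit_of_apply_eq_zero {T : H →L[ℂ] H} {u : H} (hu : u ≠ 0) (hTu : T u = 0) :
    ¬IsUnit T := fun hT =>
  hu (unit_injective T hT (by simpa using hTu))

theorem exists_unit_single {u w : H} (hu : u ≠ 0) (hw : w ≠ 0) :
    ∃ T : H →L[ℂ] H, IsUnit T ∧ T u = w := by
  by_cases hmem : w ∈ Submodule.span ℂ {u}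
  · obtain ⟨k, hk⟩ := Submodule.mem_span_singleton.1 hmem
    have hk0 : k ≠ 0 := by rintro rfl; simp at hk; exact hw hk.symm
    obtain ⟨g, hg⟩ := exists_dual_single hu (1 : ℂ)
    refine ⟨1 + g.smulRight ((k - 1) • u), shear_isUnit _ _ ?_, ?_⟩
    · rw [map_smul, hg]
      simpa using hk0
    · simp [hg, ← hk, sub_smul, smul_smul]
  · have li : LinearIndependent ℂ ![u, w] := by
      rw [LinearIndependent.pair_iff' hu]
      intro a ha
      exact hmem (ha ▸ Submodule.smul_mem _ a (Submodule.mem_span_singleton_self u))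
    obtain ⟨g, hgu, hgw⟩ := exists_dual_pair li 1 1
    refine ⟨1 + g.smulRight (w - u), shear_isUnit _ _ ?_, ?_⟩
    · rw [map_sub, hgu, hgw]; norm_num
    · simp [hgu]

theorem exists_unit_pair {u v w₁ w₂ : H} (li1 : LinearIndependent ℂ ![u, v])
    (li2 : LinearIndependent ℂ ![w₁, w₂]) :
    ∃ T : H →L[ℂ] H, IsUnit T ∧ T u = w₁ ∧ T v = w₂ := by
  have hu : u ≠ 0 := li1.ne_zero 0
  have hw1 : w₁ ≠ 0 := li2.ne_zero 0
  obtain ⟨T₁, hT₁, hT₁u⟩ := exists_unit_single hu hw1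
  set v₁ := T₁ v with hv₁
  have liwv : LinearIndependent ℂ ![w₁, v₁] := by
    have hinj : Function.Injective (T₁ : H →ₗ[ℂ] H) := unit_injective T₁ hT₁
    have := li1.map' (T₁ : H →ₗ[ℂ] H) (LinearMap.ker_eq_bot.2 hinj)
    have he : (T₁ : H →ₗ[ℂ] H) ∘ ![u, v] = ![w₁, v₁] := by
      funext i; fin_cases i <;> simp [hT₁u, hv₁]
    rwa [he] at this
  have key : ∃ T₂ : H →L[ℂ] H, IsUnit T₂ ∧ T₂ w₁ = w₁ ∧ T₂ v₁ = w₂ := by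
    by_cases hmem : w₂ ∈ Submodule.span ℂ {w₁, v₁}
    · obtain ⟨a, b, hab⟩ := Submodule.mem_span_pair.1 hmem
      have hb : b ≠ 0 := by
        rintro rfl
        rw [LinearIndependent.pair_iff' hw1] at li2
        exact li2 a (by simpa using hab)
      obtain ⟨g, hg1, hg2⟩ := exists_dual_pair liwv 0 1
      have hgw₂ : g w₂ = b := by rw [← hab]; simp [hg1, hg2]
      refine ⟨1 + g.smulRight (w₂ - v₁), shear_isUnit _ _ ?_, ?_, ?_⟩
      · rw [map_sub, hgw₂, hg2]; simpa using hb
      · simp [hg1]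
      · simp [hg2]
    · obtain ⟨g, hg1, hg2, hg3⟩ := exists_dual_triple (li_triple liwv hmem) 0 1 1
      refine ⟨1 + g.smulRight (w₂ - v₁), shear_isUnit _ _ ?_, ?_, ?_⟩
      · rw [map_sub, hg3, hg2]; norm_num
      · simp [hg1]
      · simp [hg2]
  obtain ⟨T₂, hT₂, h1, h2⟩ := key
  exact ⟨T₂ * T₁, hT₂.mul hT₁, by simp [ContinuousLinearMap.mul_apply, hT₁u, h1],
    by simp [ContinuousLinearMap.mul_apply, ← hv₁, h2]⟩

theorem comp_smulRight' (N : H →L[ℂ] H) (f : H →L[ℂ] ℂ) (x : H) :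
    N * f.smulRight x = f.smulRight (N x) := by
  ext v; simp [ContinuousLinearMap.mul_apply]

theorem smulRight_smul' (f : H →L[ℂ] ℂ) (c : ℂ) (x : H) :
    c • f.smulRight x = f.smulRight (c • x) := by
  ext v; simp [smul_smul, mul_comm]

theorem lemmaA {f : H →L[ℂ] ℂ} {x : H} {S : H →L[ℂ] H} (hS : ¬IsUnit S)
    (hSX : ¬IsUnit (S - f.smulRight x)) : ¬IsUnit (S - (2 : ℂ) • f.smulRight x) := by
  intro hM
  obtain ⟨μ, hμ⟩ := hM
  set M := S - (2 : ℂ) • f.smulRight x with hMdef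
  set N : H →L[ℂ] H := ↑μ⁻¹ with hNdef
  have hMN : M * N = 1 := by rw [← hμ]; exact μ.mul_inv
  have hNM : N * M = 1 := by rw [← hμ]; exact μ.inv_mul
  set c := f (N x) with hcdef
  have key : ∀ t : ℂ, M * (1 + f.smulRight (t • N x)) = S - (2 - t) • f.smulRight x := by
    intro t
    rw [← smulRight_smul', mul_add, mul_one, ← comp_smulRight' N f x, ← mul_smul_comm,
      ← mul_assoc, hMN, one_mul, hMdef]
    module
  have hc2 : 1 + f ((2 : ℂ) • N x) = 0 := by
    by_contra hne
    have hu : IsUnit (M * (1 + f.smulRight ((2:ℂ) • N x))) := (show IsUnit M from ⟨μ, hμ⟩).mul (shear_isUnit _ _ hne)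
    rw [key 2] at hu
    simp at hu
    exact hS hu
  have hc1 : 1 + f ((1 : ℂ) • N x) = 0 := by
    by_contra hne
    have hu : IsUnit (M * (1 + f.smulRight ((1:ℂ) • N x))) := (show IsUnit M from ⟨μ, hμ⟩).mul (shear_isUnit _ _ hne)
    rw [key 1] at hu
    norm_num at hu
    exact hSX hu
  rw [map_smul] at hc1 hc2
  simp only [smul_eq_mul, one_mul] at hc1 hc2
  rw [← hcdef] at hc1 hc2
  have : c = -1 := by linear_combination hc1
  rw [this] at hc2
  norm_num at hc2

theorem avoid_two (V₁ V₂ : Submodule ℂ H) (h₁ : V₁ ≠ ⊤) (h₂ : V₂ ≠ ⊤) :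
    ∃ v : H, v ∉ V₁ ∧ v ∉ V₂ := by
  obtain ⟨a, ha⟩ : ∃ a, a ∉ V₁ := by
    by_contra hc; push_neg at hc; exact h₁ (Submodule.eq_top_iff'.2 hc)
  obtain ⟨b, hb⟩ : ∃ b, b ∉ V₂ := by
    by_contra hc; push_neg at hc; exact h₂ (Submodule.eq_top_iff'.2 hc)
  by_cases hav : a ∉ V₂
  · exact ⟨a, ha, hav⟩
  by_cases hbv : b ∉ V₁
  · exact ⟨b, hbv, hb⟩
  push_neg at hav hbv
  refine ⟨a + b, fun hmem => ha ?_, fun hmem => hb ?_⟩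
  · have := Submodule.sub_mem V₁ hmem hbv; simpa using this
  · have := Submodule.sub_mem V₂ hmem hav; simpa using this

theorem fin_span_ne_top (hinf : ¬FiniteDimensional ℂ H) (s : Set H) (hs : s.Finite) :
    Submodule.span ℂ s ≠ ⊤ := by
  intro htop
  haveI : FiniteDimensional ℂ (Submodule.span ℂ s) := FiniteDimensional.span_of_finite ℂ hs
  rw [htop] at this
  exact hinf ((Submodule.topEquiv (R := ℂ) (M := H)).finiteDimensional)

theorem li_pair_of_notmem {a b : H} (ha : a ≠ 0) (hb : b ∉ Submodule.span ℂ {a}) :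
    LinearIndependent ℂ ![a, b] := by
  rw [LinearIndependent.pair_iff' ha]
  intro t ht
  exact hb (ht ▸ Submodule.smul_mem _ t (Submodule.mem_span_singleton_self a))

theorem li_pair_swap {a b : H} (h : LinearIndependent ℂ ![a, b]) :
    LinearIndependent ℂ ![b, a] := by
  rw [LinearIndependent.pair_iff] at h ⊢
  intro s t hst
  obtain ⟨h1, h2⟩ := h t s (by linear_combination (norm := module) hst)
  exact ⟨h2, h1⟩

theorem li_smul_pair {a b : H} (h : LinearIndependent ℂ ![a, b]) {s t : ℂ} (hs : s ≠ 0)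
    (ht : t ≠ 0) : LinearIndependent ℂ ![s • a, t • b] := by
  rw [LinearIndependent.pair_iff] at h ⊢
  intro p q hpq
  obtain ⟨h1, h2⟩ := h (p * s) (q * t) (by linear_combination (norm := module) hpq)
  exact ⟨(mul_eq_zero.1 h1).resolve_right hs, (mul_eq_zero.1 h2).resolve_right ht⟩

theorem li_neg_pair {a b : H} (h : LinearIndependent ℂ ![a, b]) :
    LinearIndependent ℂ ![-a, -b] := by
  have := li_smul_pair h (neg_ne_zero.2 one_ne_zero) (neg_ne_zero.2 one_ne_zero)
  have he : (![(-1 : ℂ) • a, (-1 : ℂ) • b] : Fin 2 → H) = ![-a, -b] := by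
    funext i; fin_cases i <;> simp
  rwa [he] at this

theorem not_rkle1_imp {Q : H →L[ℂ] H} (hQ : ¬RkLe1 Q) (w : H) :
    ∃ v, Q v ∉ Submodule.span ℂ {w} := by
  by_contra hc
  push_neg at hc
  apply hQ
  by_cases hw : w = 0
  · subst hw
    refine ⟨0, 0, ?_⟩
    ext v
    have h0 : Q v = 0 := by simpa using hc v
    simp [h0]
  · obtain ⟨η, hη⟩ := exists_dual_single hw 1
    refine ⟨η.comp Q, w, ?_⟩
    ext v
    obtain ⟨k, hk⟩ := Submodule.mem_span_singleton.1 (hc v)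
    simp only [ContinuousLinearMap.smulRight_apply, ContinuousLinearMap.comp_apply, ← hk,
      map_smul, hη, smul_eq_mul, mul_one]

theorem exists_ne_zero_apply {P : H →L[ℂ] H} (hP : P ≠ 0) : ∃ u, P u ≠ 0 := by
  by_contra hc
  push_neg at hc
  exact hP (by ext v; simp [hc v])

theorem ker_ne_top {g : H →L[ℂ] ℂ} (hg : g ≠ 0) : LinearMap.ker (g : H →ₗ[ℂ] ℂ) ≠ ⊤ := by
  intro htop
  apply hg
  ext v
  have : v ∈ LinearMap.ker (g : H →ₗ[ℂ] ℂ) := htop ▸ Submodule.mem_top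
  simpa using this

theorem keyUV (hinf : ¬FiniteDimensional ℂ H) {P Q : H →L[ℂ] H} (hP : P ≠ 0) (hQ : Q ≠ 0)
    (hPQ : ¬RkLe1 (P - Q)) :
    ∃ u v : H, u ≠ 0 ∧ v ≠ 0 ∧ LinearIndependent ℂ ![u, v] ∧
      LinearIndependent ℂ ![P u, Q v] := by
  by_cases hQ1 : RkLe1 Q
  · by_cases hP1 : RkLe1 P
    · obtain ⟨g, y, hQy⟩ := hQ1
      obtain ⟨f, x, hPx⟩ := hP1
      have hf : f ≠ 0 := by rintro rfl; apply hP; rw [hPx]; ext v; simp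
      have hx : x ≠ 0 := by rintro rfl; apply hP; rw [hPx]; ext v; simp
      have hg : g ≠ 0 := by rintro rfl; apply hQ; rw [hQy]; ext v; simp
      have hy : y ≠ 0 := by rintro rfl; apply hQ; rw [hQy]; ext v; simp
      have lixy : LinearIndependent ℂ ![x, y] := by
        by_contra hli
        rw [LinearIndependent.pair_iff' hx] at hli
        push_neg at hli
        obtain ⟨k, hk⟩ := hli
        apply hPQ
        refine ⟨f - k • g, x, ?_⟩
        ext v
        simp only [ContinuousLinearMap.sub_apply, hPx, hQy,
          ContinuousLinearMap.smulRight_apply, ContinuousLinearMap.smul_apply, smul_eq_mul,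
          sub_smul, mul_smul, ← hk]
        rw [smul_comm]
      have lifg : LinearIndependent ℂ ![f, g] := by
        by_contra hli
        rw [LinearIndependent.pair_iff' hf] at hli
        push_neg at hli
        obtain ⟨k, hk⟩ := hli
        apply hPQ
        refine ⟨f, x - k • y, ?_⟩
        ext v
        simp only [ContinuousLinearMap.sub_apply, hPx, hQy,
          ContinuousLinearMap.smulRight_apply, smul_sub, ← hk,
          ContinuousLinearMap.smul_apply, smul_eq_mul, smul_smul, mul_comm]
      obtain ⟨u, hu⟩ : ∃ u, f u ≠ 0 := by
        by_contra hc; push_neg at hc; exact hf (by ext v; simp [hc v])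
      obtain ⟨v, hv1, hv2⟩ := avoid_two (LinearMap.ker (g : H →ₗ[ℂ] ℂ)) (Submodule.span ℂ {u})
        (ker_ne_top hg) (fin_span_ne_top hinf {u} (Set.finite_singleton u))
      have hgv : g v ≠ 0 := by simpa using hv1
      have hu0 : u ≠ 0 := fun h => hu (by simp [h])
      refine ⟨u, v, hu0, fun h => hgv (by simp [h]), li_pair_of_notmem hu0 hv2, ?_⟩
      have h1 : P u = f u • x := by simp [hPx]
      have h2 : Q v = g v • y := by simp [hQy]
      rw [h1, h2]
      exact li_smul_pair lixy hu hgv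
    · -- P not rank ≤ 1
      obtain ⟨v, hv⟩ := exists_ne_zero_apply hQ
      obtain ⟨u₀, hu₀⟩ := not_rkle1_imp hP1 (Q v)
      obtain ⟨u, hu1, hu2⟩ := avoid_two
        (Submodule.comap (P : H →ₗ[ℂ] H) (Submodule.span ℂ {Q v})) (Submodule.span ℂ {v})
        (fun htop => hu₀ (by exact Submodule.mem_comap.1 (htop ▸ Submodule.mem_top : u₀ ∈ _)))
        (fin_span_ne_top hinf {v} (Set.finite_singleton v))
      have hPu : P u ∉ Submodule.span ℂ {Q v} := by simpa using hu1
      have hPu0 : P u ≠ 0 := fun h => hPu (by simp [h])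
      refine ⟨u, v, fun h => hPu0 (by simp [h]), fun h => hv (by simp [h]), ?_, ?_⟩
      · exact li_pair_swap (li_pair_of_notmem (fun h => hv (by simp [h]) : v ≠ 0) hu2)
      · exact li_pair_swap (li_pair_of_notmem hv hPu)
  · -- Q not rank ≤ 1
    obtain ⟨u, hu⟩ := exists_ne_zero_apply hP
    obtain ⟨v₀, hv₀⟩ := not_rkle1_imp hQ1 (P u)
    obtain ⟨v, hv1, hv2⟩ := avoid_two
      (Submodule.comap (Q : H →ₗ[ℂ] H) (Submodule.span ℂ {P u})) (Submodule.span ℂ {u})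
      (fun htop => hv₀ (by exact Submodule.mem_comap.1 (htop ▸ Submodule.mem_top : v₀ ∈ _)))
      (fin_span_ne_top hinf {u} (Set.finite_singleton u))
    have hQv : Q v ∉ Submodule.span ℂ {P u} := by simpa using hv1
    have hu0 : u ≠ 0 := fun h => hu (by simp [h])
    refine ⟨u, v, hu0, fun h => hQv (by simp [h, Submodule.zero_mem]), ?_, ?_⟩
    · exact li_pair_of_notmem hu0 hv2
    · exact li_pair_of_notmem hu hQv

theorem lemmaB (hinf : ¬FiniteDimensional ℂ H) {X Z : H →L[ℂ] H} (hX : ¬RkLe1 X)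
    (hZ : Z ≠ 0) (hZX : Z ≠ X) :
    ∃ S : H →L[ℂ] H, ¬IsUnit S ∧ ¬IsUnit (S - X) ∧ IsUnit (S - Z) := by
  have hQ0 : Z - X ≠ 0 := sub_ne_zero.2 hZX
  have hPQ : ¬RkLe1 (Z - (Z - X)) := by rwa [sub_sub_cancel]
  obtain ⟨u, v, hu, hv, li1, li2⟩ := keyUV hinf hZ hQ0 hPQ
  obtain ⟨T, hT, hTu, hTv⟩ := exists_unit_pair li1 (li_neg_pair li2)
  refine ⟨T + Z, ?_, ?_, ?_⟩
  · exact not_isUnit_of_apply_eq_zero hu (by simp [hTu])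
  · refine not_isUnit_of_apply_eq_zero hv ?_
    have : (T + Z - X) v = T v + (Z - X) v := by
      simp only [ContinuousLinearMap.sub_apply, ContinuousLinearMap.add_apply]
      abel
    rw [this, hTv]
    simp
  · simpa using hT

theorem lemmaB0 {Z : H →L[ℂ] H} (hZ : Z ≠ 0) :
    ∃ S : H →L[ℂ] H, ¬IsUnit S ∧ IsUnit (S - Z) := by
  obtain ⟨u, hu⟩ := exists_ne_zero_apply hZ
  have hu0 : u ≠ 0 := fun h => hu (by simp [h])
  obtain ⟨T, hT, hTu⟩ := exists_unit_single hu0 (neg_ne_zero.2 hu)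
  exact ⟨T + Z, not_isUnit_of_apply_eq_zero hu0 (by simp [hTu]), by simpa using hT⟩

theorem rk1_ne_zero {X : H →L[ℂ] H} (h : Rk1 X) : X ≠ 0 := by
  obtain ⟨f, x, hf, hx, rfl⟩ := h
  obtain ⟨v, hv⟩ : ∃ v, f v ≠ 0 := by
    by_contra hc; push_neg at hc; exact hf (by ext w; simp [hc w])
  intro h0
  have h1 : f v • x = 0 := by
    have := congrFun (congrArg DFunLike.coe h0) v
    simpa using this
  exact hx ((smul_eq_zero.1 h1).resolve_left hv)

theorem rk1_of_rkle1 {X : H →L[ℂ] H} (h : RkLe1 X) (hX : X ≠ 0) : Rk1 X := by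
  obtain ⟨f, x, rfl⟩ := h
  refine ⟨f, x, ?_, ?_, rfl⟩
  · rintro rfl; exact hX (by ext v; simp)
  · rintro rfl; exact hX (by ext v; simp)

theorem adj_iff (hinf : ¬FiniteDimensional ℂ H) (A B : H →L[ℂ] H) :
    Adj A B ↔ Rk1 (A - B) := by
  constructor
  · rintro ⟨C, hCA, hCB, hC⟩
    have hZ0 : A - C ≠ 0 := sub_ne_zero.2 (Ne.symm hCA)
    have hZX : A - C ≠ A - B := fun he => hCB (sub_right_injective he)
    have key : ∀ S, ¬IsUnit S → ¬IsUnit (S - (A - B)) → ¬IsUnit (S - (A - C)) := by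
      intro S h1 h2
      have e1 : A - (A - S) = S := by abel
      have e2 : B - (A - S) = S - (A - B) := by abel
      have e3 : C - (A - S) = S - (A - C) := by abel
      have := hC (A - S) (by rwa [e1]) (by rwa [e2])
      rwa [e3] at this
    by_contra hn
    by_cases hX0 : A - B = 0
    · obtain ⟨S, hS1, hS2⟩ := lemmaB0 hZ0
      exact key S hS1 (by rwa [hX0, sub_zero]) hS2
    · have hX1 : ¬RkLe1 (A - B) := fun hle => hn (rk1_of_rkle1 hle hX0)
      obtain ⟨S, hS1, hS2, hS3⟩ := lemmaB hinf hX1 hZ0 hZX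
      exact key S hS1 hS2 hS3
  · rintro ⟨f, x, hf, hx, hX⟩
    have hX0 : A - B ≠ 0 := rk1_ne_zero ⟨f, x, hf, hx, hX⟩
    refine ⟨A - (2 : ℂ) • (A - B), ?_, ?_, ?_⟩
    · intro he
      have h0 : (2 : ℂ) • (A - B) = 0 := sub_eq_self.1 he
      rw [smul_eq_zero] at h0
      rcases h0 with h | h
      · norm_num at h
      · exact hX0 h
    · intro he
      have h1 : A - B - (2 : ℂ) • (A - B) = 0 := by
        have : A - (2:ℂ) • (A-B) - B = A - B - (2:ℂ) • (A - B) := by abel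
        rw [← this, he, sub_self]
      have h2 : -(A - B) = 0 := by
        rw [← h1]; module
      apply hX0
      have := neg_eq_zero.1 h2
      exact this
    · intro D h1 h2
      have e1 : A - (2:ℂ) • (A - B) - D = (A - D) - (2:ℂ) • f.smulRight x := by
        rw [← hX]; module
      have e2 : B - D = (A - D) - f.smulRight x := by rw [← hX]; module
      rw [e1]
      exact lemmaA h1 (by rwa [e2] at h2)

theorem finChain_finiteRank {A : H →L[ℂ] H} (h : FinChain A) :
    FiniteDimensional ℂ (LinearMap.range (A : H →ₗ[ℂ] H)) := by
  induction h with
  | zero =>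
    have : LinearMap.range ((0 : H →L[ℂ] H) : H →ₗ[ℂ] H) = ⊥ := by
      rw [LinearMap.range_eq_bot]; rfl
    rw [this]
    infer_instance
  | @step A B hA hr ih =>
    obtain ⟨f, x, hf, hx, hX⟩ := hr
    have hle : LinearMap.range (B : H →ₗ[ℂ] H) ≤
        LinearMap.range (A : H →ₗ[ℂ] H) ⊔ Submodule.span ℂ {x} := by
      rintro w ⟨v, rfl⟩
      have : (B : H →ₗ[ℂ] H) v = A v + f v • x := by
        have := congrFun (congrArg DFunLike.coe hX) v
        simp only [ContinuousLinearMap.coe_sub', Pi.sub_apply,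
          ContinuousLinearMap.smulRight_apply] at this
        simp only [ContinuousLinearMap.coe_coe]
        rw [← sub_add_cancel (B v) (A v), this]
        abel
      rw [this]
      exact Submodule.add_mem _
        (Submodule.mem_sup_left ⟨v, rfl⟩)
        (Submodule.mem_sup_right (Submodule.smul_mem _ _ (Submodule.mem_span_singleton_self x)))
    haveI : FiniteDimensional ℂ
        (LinearMap.range (A : H →ₗ[ℂ] H) ⊔ Submodule.span ℂ {x} : Submodule ℂ H) := by
      haveI := ih
      haveI : FiniteDimensional ℂ (Submodule.span ℂ {x}) :=
        FiniteDimensional.span_of_finite ℂ (Set.finite_singleton x)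
      infer_instance
    exact Submodule.finiteDimensional_of_le hle

theorem finiteRank_finChain {A : H →L[ℂ] H}
    (h : FiniteDimensional ℂ (LinearMap.range (A : H →ₗ[ℂ] H))) : FinChain A := by
  generalize hn : Module.finrank ℂ (LinearMap.range (A : H →ₗ[ℂ] H)) = n
  induction n using Nat.strong_induction_on generalizing A with
  | _ n ih =>
    by_cases hA0 : A = 0
    · rw [hA0]; exact FinChain.zero
    · obtain ⟨u, hu⟩ : ∃ u, A u ≠ 0 := by
        by_contra hc; push_neg at hc; exact hA0 (by ext v; simp [hc v])
      obtain ⟨g, hg⟩ := exists_dual_single hu 1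
      set X : H →L[ℂ] H := (g.comp A).smulRight (A u) with hXdef
      set A' : H →L[ℂ] H := A - X with hA'def
      set r := LinearMap.range (A : H →ₗ[ℂ] H) with hr
      have hyr : A u ∈ r := ⟨u, by simp⟩
      have hle : LinearMap.range (A' : H →ₗ[ℂ] H) ≤ r ⊓ LinearMap.ker (g : H →ₗ[ℂ] ℂ) := by
        rintro w ⟨v, rfl⟩
        have happ : (A' : H →ₗ[ℂ] H) v = A v - g (A v) • A u := by
          simp [hA'def, hXdef]
        refine Submodule.mem_inf.2 ⟨?_, ?_⟩
        · rw [happ]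
          exact Submodule.sub_mem _ ⟨v, by simp⟩ (Submodule.smul_mem _ _ hyr)
        · rw [LinearMap.mem_ker, happ]
          simp [hg]
      have hlt : r ⊓ LinearMap.ker (g : H →ₗ[ℂ] ℂ) < r := by
        rw [lt_iff_le_and_ne]
        refine ⟨inf_le_left, fun he => ?_⟩
        have : A u ∈ r ⊓ LinearMap.ker (g : H →ₗ[ℂ] ℂ) := by rw [he]; exact hyr
        rw [Submodule.mem_inf, LinearMap.mem_ker, ContinuousLinearMap.coe_coe, hg] at this
        exact one_ne_zero this.2
      haveI hfin' : FiniteDimensional ℂ (r ⊓ LinearMap.ker (g : H →ₗ[ℂ] ℂ) : Submodule ℂ H) :=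
        Submodule.finiteDimensional_of_le inf_le_left
      haveI : FiniteDimensional ℂ (LinearMap.range (A' : H →ₗ[ℂ] H)) :=
        Submodule.finiteDimensional_of_le hle
      have hrank : Module.finrank ℂ (LinearMap.range (A' : H →ₗ[ℂ] H)) < n := by
        calc Module.finrank ℂ (LinearMap.range (A' : H →ₗ[ℂ] H))
            ≤ Module.finrank ℂ (r ⊓ LinearMap.ker (g : H →ₗ[ℂ] ℂ) : Submodule ℂ H) :=
              Submodule.finrank_mono hle
          _ < Module.finrank ℂ r := Submodule.finrank_lt_finrank_of_lt hlt
          _ = n := hn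
      have hchain' : FinChain A' := ih _ hrank (A := A') inferInstance rfl
      have hrk1 : Rk1 (A - A') := by
        refine ⟨g.comp A, A u, ?_, hu, ?_⟩
        · intro hgc
          have : g (A u) = 0 := by
            have := congrFun (congrArg DFunLike.coe hgc) u
            simpa using this
          rw [hg] at this
          exact one_ne_zero this
        · rw [hA'def]; abel
      exact FinChain.step hchain' hrk1

theorem adj_transport {ρ : (H →L[ℂ] H) → (H →L[ℂ] H)} (hbij : Function.Bijective ρ)
    (hρ : ∀ A B, IsUnit (A - B) ↔ IsUnit (ρ A - ρ B)) {A B : H →L[ℂ] H} (h : Adj A B) :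
    Adj (ρ A) (ρ B) := by
  obtain ⟨C, hCA, hCB, hC⟩ := h
  refine ⟨ρ C, fun he => hCA (hbij.1 he), fun he => hCB (hbij.1 he), fun D h1 h2 => ?_⟩
  obtain ⟨D₀, rfl⟩ := hbij.2 D
  rw [← hρ] at h1 h2 ⊢
  exact hC D₀ h1 h2

theorem chain_transport (hinf : ¬FiniteDimensional ℂ H) {ρ : (H →L[ℂ] H) → (H →L[ℂ] H)}
    (hbij : Function.Bijective ρ) (h0 : ρ 0 = 0)
    (hρ : ∀ A B, IsUnit (A - B) ↔ IsUnit (ρ A - ρ B)) {A : H →L[ℂ] H} (h : FinChain A) :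
    FinChain (ρ A) := by
  induction h with
  | zero => rw [h0]; exact FinChain.zero
  | @step A' B hA' hr ih =>
    refine FinChain.step ih ?_
    rw [← adj_iff hinf] at hr ⊢
    exact adj_transport hbij hρ hr

end Stmt18Aux

theorem stmt_18 (H : Type*) [NormedAddCommGroup H] [InnerProductSpace ℂ H] [CompleteSpace H]
    (hinf : ¬ FiniteDimensional ℂ H)
    (φ : (H →L[ℂ] H) → (H →L[ℂ] H)) (hbij : Function.Bijective φ)
    (h : ∀ A B : H →L[ℂ] H, IsUnit (A - B) ↔ IsUnit (φ A - φ B)) :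
    Set.BijOn (fun A => φ A - φ 0)
      {A : H →L[ℂ] H | FiniteDimensional ℂ (LinearMap.range (A : H →ₗ[ℂ] H))}
      {A : H →L[ℂ] H | FiniteDimensional ℂ (LinearMap.range (A : H →ₗ[ℂ] H))} := by
  set ψ : (H →L[ℂ] H) → (H →L[ℂ] H) := fun A => φ A - φ 0 with hψdef
  have hψbij : Function.Bijective ψ := by
    have : ψ = (fun B => B - φ 0) ∘ φ := rfl
    rw [this]
    exact (Equiv.subRight (φ 0)).bijective.comp hbij
  have hψ0 : ψ 0 = 0 := by simp [hψdef]
  have hψh : ∀ A B, IsUnit (A - B) ↔ IsUnit (ψ A - ψ B) := by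
    intro A B
    have he : ψ A - ψ B = φ A - φ B := by simp [hψdef]
    rw [he]
    exact h A B
  set e := Equiv.ofBijective φ hbij with hedef
  set χ : (H →L[ℂ] H) → (H →L[ℂ] H) := fun D => e.symm (D + φ 0) with hχdef
  have hχbij : Function.Bijective χ :=
    e.symm.bijective.comp (Equiv.addRight (φ 0)).bijective
  have hφχ : ∀ D, φ (χ D) = D + φ 0 := fun D => e.apply_symm_apply (D + φ 0)
  have hχ0 : χ 0 = 0 := by
    rw [hχdef]
    simp only [zero_add]
    have : e 0 = φ 0 := rfl
    rw [← this, Equiv.symm_apply_apply]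
  have hχh : ∀ A B, IsUnit (A - B) ↔ IsUnit (χ A - χ B) := by
    intro A B
    have := h (χ A) (χ B)
    rw [hφχ, hφχ] at this
    simpa using this.symm
  refine ⟨?_, ?_, ?_⟩
  · intro A hA
    exact Set.mem_setOf.2 (finChain_finiteRank
      (chain_transport hinf hψbij hψ0 hψh (finiteRank_finChain (Set.mem_setOf.1 hA))))
  · intro A _ B _ he
    exact hbij.1 (by simpa [hψdef, sub_left_inj] using he)
  · intro A hA
    refine ⟨χ A, Set.mem_setOf.2 (finChain_finiteRank
      (chain_transport hinf hχbij hχ0 hχh (finiteRank_finChain (Set.mem_setOf.1 hA)))), ?_⟩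
    show ψ (χ A) = A
    rw [hψdef]
    simp only
    rw [hφχ]
    abel
end
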